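/- Let P be a regular reductive m×n c-ramified matrix over a group representation (X;G) and for i ∈ {1,…,n} let X_i = { i_x/θ_P : x ∈ X } ⊆ V_{θ_P}. For r ≠ s, X_r ∩ X_s ≠ ∅ if and only if {P^{(r)}, P^{(s)}} is an edge of Gr(P). The equivalence relation on V_{θ_P} generated by the union of X_i × X_i over all i is the universal relation if and only if Gr(P) is connected. Consequently, if the representation (V_{θ_P}; L((X;G);P)) is primitive, then Gr(P) is connected. -/

import Mathlib

section Ramified

variable {X G : Type*} [Group G]

/-- The action of the monomial matrix (triple) `t = [r, g, λ]` on the vector `a = i_x`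
over a ramified matrix `P`:  `[r,g,λ](i_x) = r_{g(P(λ,i)(x))}`. -/
def ramAct (φ : G →* Equiv.Perm X) {m n : ℕ}
    (P : Fin m → Fin n → X → X) (t : Fin n × G × Fin m) (a : Fin n × X) : Fin n × X :=
  (t.1, φ t.2.1 (P t.2.2 a.1 a.2))

/-- The maximal deflation `θ_P`: `(r_x, s_y) ∈ θ_P` iff `P(λ,r)(x) = P(λ,s)(y)` for all
rows `λ`. -/
def thetaP {m n : ℕ} (P : Fin m → Fin n → X → X) (a b : Fin n × X) : Prop :=
  ∀ lam : Fin m, P lam a.1 a.2 = P lam b.1 b.2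

/-- `P` is c-ramified over `(X;G)`: every entry is a permutation coming from `G` or a
constant function. -/
def CRamified (φ : G →* Equiv.Perm X) {m n : ℕ} (P : Fin m → Fin n → X → X) : Prop :=
  ∀ lam i, (∃ g, P lam i = ⇑(φ g)) ∨ ∃ x0, P lam i = fun _ => x0

/-- `P` is regular: every row and every column contains a `G`-entry. -/
def RegularMat (φ : G →* Equiv.Perm X) {m n : ℕ} (P : Fin m → Fin n → X → X) : Prop :=
  (∀ lam, ∃ i g, P lam i = ⇑(φ g)) ∧ ∀ i, ∃ lam g, P lam i = ⇑(φ g)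

/-- `P` is reductive: no two distinct rows are proportional and no two distinct columns
are proportional. -/
def Reductive (φ : G →* Equiv.Perm X) {m n : ℕ} (P : Fin m → Fin n → X → X) : Prop :=
  (∀ μ β : Fin m, (∃ g : G, ∀ i, ⇑(φ g) ∘ P μ i = P β i) → μ = β) ∧
    ∀ r s : Fin n, (∃ h : G, ∀ lam, P lam r ∘ ⇑(φ h) = P lam s) → r = s

/-- The edge relation of the graph `Gr(P)` on the columns of `P`. -/
def GrAdj {m n : ℕ} (P : Fin m → Fin n → X → X) (r s : Fin n) : Prop :=
  r ≠ s ∧ ∃ x y : X, ∀ lam : Fin m, P lam r x = P lam s y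

end Ramified

/-! The columns of `V` meet in `V_{θ_P}` exactly along the edges of `Gr(P)`, so the equivalence
generated by the blocks `X_i` relates `r_x` and `s_y` precisely when `r` and `s` lie in one
component of `Gr(P)`. This equivalence is compatible with `L((X;G);P)`, since every monomial
triple `[r,g,λ]` maps all of `V` into the single column `r`. By primitivity it is either `θ_P`,
which by regularity would collapse `X` to a point and hence, by reductivity, all columns to one,
or universal, in which case `Gr(P)` is connected. -/

open Relation

section Ramified

variable {X G : Type*} {m n : ℕ}

instance (P : Fin m → Fin n → X → X) : Std.Symm (GrAdj P) where
  symm _ _ := fun ⟨hne, x, y, h⟩ => ⟨hne.symm, y, x, fun lam => (h lam).symm⟩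

/-- On `V = Fin n × X`, generating an equivalence from `thetaOrSameCol P` models generating one
on `V_{θ_P}` from the blocks `X_i × X_i`. -/
def thetaOrSameCol (P : Fin m → Fin n → X → X) (p q : Fin n × X) : Prop :=
  thetaP P p q ∨ p.1 = q.1

theorem reflTransGen_grAdj_of_eqvGen {P : Fin m → Fin n → X → X} {a b : Fin n × X}
    (h : EqvGen (thetaOrSameCol P) a b) : ReflTransGen (GrAdj P) a.1 b.1 := by
  have hequiv : Equivalence fun p q : Fin n × X => ReflTransGen (GrAdj P) p.1 q.1 := by
    rw [← EqvGen.eqvGen_eq_reflTransGen]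
    exact InvImage.equivalence _ _ (EqvGen.is_equivalence _)
  refine hequiv.eqvGen_iff.mp (EqvGen.mono ?_ _ _ h)
  rintro p q (hθ | hcol)
  · by_cases hpq : p.1 = q.1
    · exact hpq ▸ .refl
    · exact .single ⟨hpq, p.2, q.2, hθ⟩
  · exact hcol ▸ .refl

theorem eqvGen_thetaOrSameCol_of_reflTransGen {P : Fin m → Fin n → X → X} {r s : Fin n}
    (h : ReflTransGen (GrAdj P) r s) (x y : X) : EqvGen (thetaOrSameCol P) (r, x) (s, y) := by
  induction h generalizing y with
  | refl => exact .rel _ _ (.inr rfl)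
  | @tail c d _ hcd ih =>
    obtain ⟨-, x', y', hθ⟩ := hcd
    exact ((ih x').trans _ _ _ (.rel (c, x') (d, y') (.inl hθ))).trans _ _ _ (.rel _ _ (.inr rfl))

theorem Reductive.col_eq_of_subsingleton [Group G] [Subsingleton X] {φ : G →* Equiv.Perm X}
    {P : Fin m → Fin n → X → X} (hred : Reductive φ P) (r s : Fin n) : r = s :=
  hred.2 r s ⟨1, fun _ => funext fun _ => Subsingleton.elim _ _⟩

theorem RegularMat.subsingleton_of_thetaP_col [Group G] {φ : G →* Equiv.Perm X}
    {P : Fin m → Fin n → X → X} (hreg : RegularMat φ P) {r : Fin n}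
    (h : ∀ x y, thetaP P (r, x) (r, y)) : Subsingleton X := by
  obtain ⟨lam, g, hg⟩ := hreg.2 r
  refine ⟨fun x y => (φ g).injective ?_⟩
  simpa only [hg] using h x y lam

theorem eqvGen_thetaOrSameCol_universal_iff [Group G] {φ : G →* Equiv.Perm X}
    {P : Fin m → Fin n → X → X} (hred : Reductive φ P) :
    (∀ a b, EqvGen (thetaOrSameCol P) a b) ↔ ∀ r s, ReflTransGen (GrAdj P) r s := by
  refine ⟨fun huniv r s => ?_, fun hconn a b => eqvGen_thetaOrSameCol_of_reflTransGen
    (hconn a.1 b.1) a.2 b.2⟩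
  rcases isEmpty_or_nonempty X with _ | ⟨⟨x⟩⟩
  · exact hred.col_eq_of_subsingleton r s ▸ .refl
  · exact reflTransGen_grAdj_of_eqvGen (huniv (r, x) (s, x))

end Ramified

theorem graph_of_matrix_and_primitivity_general {X G : Type*} [Group G]
    (φ : G →* Equiv.Perm X) {m n : ℕ} (P : Fin m → Fin n → X → X)
    (hreg : RegularMat φ P) (hred : Reductive φ P) :
    (∀ r s : Fin n, r ≠ s →
      ((∃ x y : X, thetaP P (r, x) (s, y)) ↔ GrAdj P r s)) ∧
    ((∀ a b : Fin n × X,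
        Relation.EqvGen (fun p q => thetaP P p q ∨ p.1 = q.1) a b) ↔
      ∀ r s : Fin n, Relation.ReflTransGen (GrAdj P) r s) ∧
    ((∀ β : (Fin n × X) → (Fin n × X) → Prop, Equivalence β →
        (∀ a b, thetaP P a b → β a b) →
        (∀ a b, β a b → ∀ t : Fin n × G × Fin m,
          β (ramAct φ P t a) (ramAct φ P t b)) →
        (∀ a b, β a b → thetaP P a b) ∨ (∀ a b, β a b)) →
      ∀ r s : Fin n, Relation.ReflTransGen (GrAdj P) r s) := by
  refine ⟨fun r s hrs => ⟨fun ⟨x, y, h⟩ => ⟨hrs, x, y, h⟩, fun ⟨_, h⟩ => h⟩,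
    eqvGen_thetaOrSameCol_universal_iff hred, fun hprim => ?_⟩
  rcases hprim (EqvGen (thetaOrSameCol P)) (EqvGen.is_equivalence _)
      (fun _ _ hθ => .rel _ _ (.inl hθ)) (fun _ _ _ _ => .rel _ _ (.inr rfl)) with hθ | huniv
  · intro r s
    have : Subsingleton X :=
      hreg.subsingleton_of_thetaP_col fun x y => hθ (r, x) (r, y) (.rel _ _ (.inr rfl))
    exact hred.col_eq_of_subsingleton r s ▸ .refl
  · exact (eqvGen_thetaOrSameCol_universal_iff hred).mp huniv

/-- Let `P` be a regular reductive c-ramified matrix over `(X;G)` and, for a column `i`,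
let `X_i = {i_x/θ_P : x ∈ X} ⊆ V_{θ_P}`.  Then: for `r ≠ s`, `X_r ∩ X_s ≠ ∅` iff
`{P^{(r)}, P^{(s)}}` is an edge of `Gr(P)`; the equivalence relation on `V_{θ_P}`
generated by the union of the `X_i × X_i` (encoded on `V` as the relation generated by
`θ_P` together with "same first coordinate") is the universal relation iff `Gr(P)` is
connected; and consequently, if the representation `(V_{θ_P}; L((X;G);P))` is primitive
then `Gr(P)` is connected.  (Equivalence relations on the quotient `V_{θ_P}` are encoded
as equivalence relations on `V` containing `θ_P`; compatibility with the constant maps of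
`L((X;G);P)` is automatic.) -/
theorem graph_of_matrix_and_primitivity {X G : Type*} [Fintype X] [Group G] [Fintype G]
    (φ : G →* Equiv.Perm X) {m n : ℕ} (P : Fin m → Fin n → X → X)
    (hcram : CRamified φ P) (hreg : RegularMat φ P) (hred : Reductive φ P) :
    (∀ r s : Fin n, r ≠ s →
      ((∃ x y : X, thetaP P (r, x) (s, y)) ↔ GrAdj P r s)) ∧
    ((∀ a b : Fin n × X,
        Relation.EqvGen (fun p q => thetaP P p q ∨ p.1 = q.1) a b) ↔
      ∀ r s : Fin n, Relation.ReflTransGen (GrAdj P) r s) ∧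
    ((∀ β : (Fin n × X) → (Fin n × X) → Prop, Equivalence β →
        (∀ a b, thetaP P a b → β a b) →
        (∀ a b, β a b → ∀ t : Fin n × G × Fin m,
          β (ramAct φ P t a) (ramAct φ P t b)) →
        (∀ a b, β a b → thetaP P a b) ∨ (∀ a b, β a b)) →
      ∀ r s : Fin n, Relation.ReflTransGen (GrAdj P) r s) :=
  graph_of_matrix_and_primitivity_general φ P hreg hred
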